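/- arXiv:math/9903094 — 3 statements merged into one kernel-verified Lean document; each statement's English description precedes it below -/
import Mathlib

section
/- For every π ∈ S_n (n ≥ 1), there exists a transitive ordered factorisation of π into exactly n + κ(π) − 2 transpositions. -/
/-! Writing each `k`-cycle as the `k - 1` transpositions along its orbit factors `π` into
`n - κ(π)` transpositions. Now pick one point in each of the `κ(π)` cycles of `π`, including
fixed points, and a base point `r₀` among them, and append `(r₀ r)(r₀ r)` for every other chosen
point `r`. The product is unchanged, and the generated group contains `π` and every `(r₀ r)`, so
it carries `r₀` to every point. This costs `2(κ(π) - 1)` further factors. -/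

/-- The number of cycles of a permutation of `Fin n`, counting fixed points. -/
def kappa {n : ℕ} (σ : Equiv.Perm (Fin n)) : ℕ :=
  σ.cycleType.card + (n - σ.support.card)

open Equiv Equiv.Perm Finset

theorem List.Nodup.isSwap_of_mem_zipWith_swap_tail {α : Type*} [DecidableEq α] :
    ∀ {l : List α}, l.Nodup → ∀ σ ∈ zipWith Equiv.swap l l.tail, σ.IsSwap
  | [], _, _, h | [_], _, _, h => by simp at h
  | x :: y :: l, hl, σ, hσ => by
    rcases List.mem_cons.mp hσ with rfl | hσ
    · exact ⟨x, y, fun h => by simp [h] at hl, rfl⟩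
    · exact hl.of_cons.isSwap_of_mem_zipWith_swap_tail σ hσ

namespace Equiv.Perm

variable {α : Type*}

theorem SameCycle.mul_of_apply_right_eq_self {f g : Perm α} {x y : α} (hfg : Commute f g)
    (hx : g x = x) (h : f.SameCycle x y) : (f * g).SameCycle x y := by
  obtain ⟨i, rfl⟩ := h
  exact ⟨i, by simp [hfg.mul_zpow, zpow_apply_eq_self_of_apply_eq_self hx]⟩

variable [DecidableEq α]

theorem prod_flatMap_swap_swap (r₀ : α) :
    ∀ l : List α, (l.flatMap fun r => [swap r₀ r, swap r₀ r]).prod = 1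
  | [] => rfl
  | r :: l => by simp [prod_flatMap_swap_swap r₀ l]

theorem exists_apply_eq_of_swap_mem_of_sameCycle {H : Subgroup (Perm α)} {π : Perm α}
    (hπ : π ∈ H) {F : Set α} {r₀ : α} (hF : ∀ r ∈ F, swap r₀ r ∈ H)
    (hcover : ∀ a, ∃ r ∈ F, π.SameCycle r a) (a b : α) : ∃ g ∈ H, g a = b := by
  have reach : ∀ a, ∃ g ∈ H, g r₀ = a := fun a => by
    obtain ⟨r, hr, i, rfl⟩ := hcover a
    exact ⟨π ^ i * swap r₀ r, mul_mem (zpow_mem hπ i) (hF r hr), by simp⟩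
  obtain ⟨g, hg, rfl⟩ := reach a
  obtain ⟨h, hh, rfl⟩ := reach b
  exact ⟨h * g⁻¹, mul_mem hh (inv_mem hg), by simp⟩

theorem exists_transitive_swap_factorisation_of_sameCycle_cover {π : Perm α}
    {L : List (Perm α)} (hswap : ∀ σ ∈ L, σ.IsSwap) (hprod : L.prod = π) {F : Finset α}
    {r₀ : α} (hr₀ : r₀ ∈ F) (hcover : ∀ a, ∃ r ∈ F, π.SameCycle r a) :
    ∃ L' : List (Perm α), (∀ σ ∈ L', σ.IsSwap) ∧ L'.prod = π ∧
      (∀ a b : α, ∃ g ∈ Subgroup.closure {σ | σ ∈ L'}, g a = b) ∧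
      L'.length = L.length + 2 * (#F - 1) := by
  set C := (F.erase r₀).toList.flatMap fun r => [swap r₀ r, swap r₀ r]
  have hC : ∀ r ∈ F, r ≠ r₀ → swap r₀ r ∈ C := fun r hr hne =>
    List.mem_flatMap.mpr ⟨r, mem_toList.mpr (mem_erase.mpr ⟨hne, hr⟩), by simp⟩
  refine ⟨L ++ C, ?_, by simp [C, hprod, prod_flatMap_swap_swap], ?_, ?_⟩
  · intro σ hσ
    rcases List.mem_append.mp hσ with hσ | hσ
    · exact hswap σ hσ
    · obtain ⟨r, hr, hσ⟩ := List.mem_flatMap.mp hσ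
      have hne := (mem_erase.mp (mem_toList.mp hr)).1
      simp only [List.mem_cons, List.not_mem_nil, or_false, or_self] at hσ
      exact hσ ▸ ⟨r₀, r, hne.symm, rfl⟩
  · set H := Subgroup.closure {σ | σ ∈ L ++ C}
    have hπ : π ∈ H := hprod ▸ H.list_prod_mem fun σ hσ =>
      Subgroup.subset_closure (List.mem_append_left C hσ)
    refine exists_apply_eq_of_swap_mem_of_sameCycle hπ (F := F) (r₀ := r₀) (fun r hr => ?_) hcover
    rcases eq_or_ne r r₀ with rfl | hne
    · exact (swap_self r).symm ▸ H.one_mem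
    · exact Subgroup.subset_closure (List.mem_append_right L (hC r hr hne))
  · simp [C, card_erase_of_mem hr₀, mul_comm]

variable [Fintype α]

theorem IsCycle.exists_swap_factorisation {σ : Perm α} (hσ : σ.IsCycle) :
    ∃ L : List (Perm α), (∀ τ ∈ L, τ.IsSwap) ∧ L.prod = σ ∧ L.length + 1 = #σ.support := by
  obtain ⟨x, hx, -⟩ := id hσ
  refine ⟨List.zipWith swap (toList σ x) (toList σ x).tail,
    List.Nodup.isSwap_of_mem_zipWith_swap_tail (nodup_toList σ x), ?_, ?_⟩
  -- `List.formPerm l` is by definition the product of the swaps of consecutive entries of `l`.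
  · rw [← List.formPerm, formPerm_toList, hσ.cycleOf_eq hx]
  · have := hσ.two_le_card_support
    simp only [List.length_zipWith, List.length_tail, length_toList, hσ.cycleOf_eq hx]
    omega

theorem exists_swap_factorisation_and_cycle_representatives (π : Perm α) :
    ∃ L : List (Perm α), ∃ R : Finset α, (∀ τ ∈ L, τ.IsSwap) ∧ L.prod = π ∧
      L.length + #R = #π.support ∧ #R = π.cycleType.card ∧ R ⊆ π.support ∧
      ∀ a ∈ π.support, ∃ r ∈ R, π.SameCycle r a := by
  induction π using cycle_induction_on with
  | base_one => exact ⟨[], ∅, by simp⟩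
  | base_cycles σ hσ =>
    obtain ⟨L, hswap, hprod, hlen⟩ := hσ.exists_swap_factorisation
    obtain ⟨x, hx⟩ := hσ.nonempty_support
    refine ⟨L, {x}, hswap, hprod, by simpa using hlen, by simp [hσ.cycleType],
      singleton_subset_iff.mpr hx, fun a ha => ⟨x, mem_singleton_self x, ?_⟩⟩
    exact hσ.sameCycle (mem_support.mp hx) (mem_support.mp ha)
  | induction_disjoint σ τ hd _ hσ hτ =>
    obtain ⟨L₁, R₁, hswap₁, hprod₁, hlen₁, hcard₁, hsub₁, hcover₁⟩ := hσ
    obtain ⟨L₂, R₂, hswap₂, hprod₂, hlen₂, hcard₂, hsub₂, hcover₂⟩ := hτ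
    have hR : _root_.Disjoint R₁ R₂ := hd.disjoint_support.mono hsub₁ hsub₂
    refine ⟨L₁ ++ L₂, R₁ ∪ R₂, ?_, by simp [hprod₁, hprod₂], ?_, ?_, ?_, ?_⟩
    · simpa [or_imp, forall_and] using ⟨hswap₁, hswap₂⟩
    · simp only [List.length_append, card_union_of_disjoint hR, hd.card_support_mul]
      omega
    · simp [card_union_of_disjoint hR, hd.cycleType_mul, hcard₁, hcard₂]
    · rw [hd.support_mul]
      exact union_subset_union hsub₁ hsub₂
    · intro a ha
      rcases mem_union.mp (hd.support_mul ▸ ha) with ha | ha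
      · obtain ⟨r, hr, hra⟩ := hcover₁ a ha
        exact ⟨r, mem_union_left _ hr, hra.mul_of_apply_right_eq_self hd.commute
          ((hd r).resolve_left (mem_support.mp (hsub₁ hr)))⟩
      · obtain ⟨r, hr, hra⟩ := hcover₂ a ha
        rw [hd.commute.eq]
        exact ⟨r, mem_union_right _ hr, hra.mul_of_apply_right_eq_self hd.symm.commute
          ((hd r).resolve_right (mem_support.mp (hsub₂ hr)))⟩

end Equiv.Perm

theorem exists_minimal_transitive_transposition_factorisation (n : ℕ) (hn : 1 ≤ n)
    (π : Equiv.Perm (Fin n)) :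
    ∃ L : List (Equiv.Perm (Fin n)),
      (∀ σ ∈ L, σ.IsSwap) ∧ L.prod = π ∧
      (∀ a b : Fin n, ∃ g ∈ Subgroup.closure {σ | σ ∈ L}, g a = b) ∧
      L.length = n + kappa π - 2 := by
  obtain ⟨L, R, hswap, hprod, hlen, hcard, hsub, hcover⟩ :=
    exists_swap_factorisation_and_cycle_representatives π
  set F := π.supportᶜ ∪ R
  have hF : #F = kappa π := by
    rw [card_union_of_disjoint (disjoint_compl_left.mono_right hsub), card_compl,
      Fintype.card_fin, hcard, kappa]
    omega
  have hFcover : ∀ a, ∃ r ∈ F, π.SameCycle r a := fun a => by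
    by_cases ha : a ∈ π.support
    · obtain ⟨r, hr, hra⟩ := hcover a ha
      exact ⟨r, mem_union_right _ hr, hra⟩
    · exact ⟨a, mem_union_left _ (mem_compl.mpr ha), SameCycle.refl π a⟩
  obtain ⟨r₀, hr₀, -⟩ := hFcover ⟨0, hn⟩
  obtain ⟨L', hswap', hprod', htrans, hlen'⟩ :=
    exists_transitive_swap_factorisation_of_sameCycle_cover hswap hprod hr₀ hFcover
  refine ⟨L', hswap', hprod', htrans, ?_⟩
  have hF_pos : 0 < #F := card_pos.mpr ⟨r₀, hr₀⟩
  have hsupport_le : #π.support ≤ n := by simpa using card_le_univ π.support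
  unfold kappa at hF ⊢
  omega
end

section
/- The unique formal power series solution w(x) of the functional equation w = x·exp(w^{k−1}) is given by w(x) = ∑_{m≥0} (1+(k−1)m)^{m−1}/m! · x^{1+(k−1)m}. -/
/-!
Put `a = k - 1` and `A_n(y) = y (y + a n)^(n-1) / n!`. Abel's identity says that the `A_n` are
of binomial type, `A_n(y + z) = ∑_{i+j=n} A_i(y) A_j(z)`; by induction on `n` it follows from
`A_n' = A_{n-1}(· + a)` and `A_n(0) = 0` for `n > 0`. Hence `F_y(t) = ∑ A_n(y) tⁿ` satisfies
`F_{y+z} = F_y F_z`. The explicit series is `w = x F_1(x^a)`, so `w^a = x^a F_a(x^a)` and the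
functional equation reduces to `exp(t F_a(t)) = F_1(t)`, which on coefficients is the binomial
theorem. Uniqueness holds because the coefficient of `x^(n+1)` in `x exp(w^a)` only involves the
coefficients of `w` up to `xⁿ`.
-/

open PowerSeries

/-- Composition `f(a)` of formal power series, valid when `a` has zero constant
term: the coefficient of `xⁿ` is `∑_{j≤n} f_j · [xⁿ](aʲ)`. -/
noncomputable def psComp (f a : PowerSeries ℚ) : PowerSeries ℚ :=
  PowerSeries.mk fun n => ∑ j ∈ Finset.range (n + 1),
    (PowerSeries.coeff (R := ℚ) j f) * (PowerSeries.coeff (R := ℚ) n (a ^ j))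

/-- The explicit series `w(x) = ∑_{m≥0} (1+(k−1)m)^{m−1}/m! · x^{1+(k−1)m}`. -/
noncomputable def wSeries (k : ℕ) : PowerSeries ℚ :=
  PowerSeries.mk fun n =>
    if 1 ≤ n ∧ (k - 1) ∣ (n - 1) then
      ((n : ℚ) ^ ((((n - 1) / (k - 1) : ℕ) : ℤ) - 1)) / (Nat.factorial ((n - 1) / (k - 1)))
    else 0

open Finset
open scoped Nat

namespace Polynomial

variable {K : Type*} [Field K]

noncomputable def abelPoly (a : K) : ℕ → K[X]
  | 0 => 1
  | n + 1 => C ((n + 1)! : K)⁻¹ * X * (X + C (a * (n + 1))) ^ n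

@[simp]
theorem abelPoly_zero (a : K) : abelPoly a 0 = 1 := rfl

theorem eval_abelPoly_succ (a x : K) (n : ℕ) :
    (abelPoly a (n + 1)).eval x = ((n + 1)! : K)⁻¹ * x * (x + a * (n + 1)) ^ n := by
  simp [abelPoly]

theorem eval_zero_abelPoly_succ (a : K) (n : ℕ) : (abelPoly a (n + 1)).eval 0 = 0 := by
  simp [eval_abelPoly_succ]

variable [CharZero K]

theorem derivative_abelPoly_succ (a : K) (n : ℕ) :
    derivative (abelPoly a (n + 1)) = (abelPoly a n).comp (X + C a) := by
  cases n with
  | zero => simp [abelPoly]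
  | succ m =>
    have hfac : C ((m + 1 + 1)! : K)⁻¹ * (m + 1 + 1) = C ((m + 1)! : K)⁻¹ := by
      have hm : (m + 1 + 1 : K) ≠ 0 := by exact_mod_cast (m + 1).succ_ne_zero
      rw [← C_eq_natCast, ← C_1, ← C_add, ← C_add, ← C_mul, Nat.factorial_succ (m + 1)]
      push_cast
      field_simp
    simp only [abelPoly, derivative_mul, derivative_C, derivative_X, derivative_X_add_C_pow,
      mul_comp, C_comp, X_comp, pow_comp, add_comp]
    simp only [map_mul, map_add, map_natCast, map_one, Nat.cast_add, Nat.cast_one,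
      add_tsub_cancel_right]
    linear_combination (X + C a) * (X + C a * ((m : K[X]) + 1 + 1)) ^ m * hfac

theorem eq_of_derivative_eq_of_eval_zero_eq {p q : K[X]} (hd : derivative p = derivative q)
    (h0 : p.eval 0 = q.eval 0) : p = q := by
  have h := eq_C_of_derivative_eq_zero (p := p - q) (by rw [derivative_sub, hd, sub_self])
  rw [coeff_zero_eq_eval_zero, eval_sub, h0, sub_self, map_zero] at h
  exact sub_eq_zero.mp h

theorem abelPoly_comp_X_add_C (a y : K) (n : ℕ) :
    (abelPoly a n).comp (X + C y) =
      ∑ p ∈ antidiagonal n, abelPoly a p.1 * C ((abelPoly a p.2).eval y) := by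
  induction n with
  | zero => simp
  | succ n ih =>
    refine eq_of_derivative_eq_of_eval_zero_eq ?_ ?_
    · have hshift : (X + C a).comp (X + C y) = (X + C y).comp (X + C a) := by
        simp only [add_comp, X_comp, C_comp]; ring
      simp only [derivative_comp, derivative_abelPoly_succ, one_mul, Nat.sum_antidiagonal_succ,
        derivative_add, derivative_sum, derivative_X, derivative_mul, derivative_C, abelPoly_zero,
        mul_zero, add_zero, zero_add]
      rw [comp_assoc, hshift, ← comp_assoc, ih]
      simp only [sum_comp, mul_comp, C_comp]
    · simp [Nat.sum_antidiagonal_succ, eval_finsetSum, eval_zero_abelPoly_succ]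

theorem eval_add_abelPoly (a x y : K) (n : ℕ) :
    (abelPoly a n).eval (x + y) =
      ∑ p ∈ antidiagonal n, (abelPoly a p.1).eval x * (abelPoly a p.2).eval y := by
  simpa [eval_comp, eval_finsetSum] using congrArg (eval x) (abelPoly_comp_X_add_C a y n)

theorem sum_range_inv_factorial_mul_eval_abelPoly (a : K) (m : ℕ) :
    ∑ j ∈ range (m + 1), (j ! : K)⁻¹ * (abelPoly a (m - j)).eval (j * a) =
      (abelPoly a m).eval 1 := by
  cases m with
  | zero => simp
  | succ n =>
    rw [sum_range_succ', Nat.cast_zero, zero_mul, Nat.sub_zero, eval_zero_abelPoly_succ,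
      mul_zero, add_zero]
    have hterm : ∀ j ∈ range (n + 1),
        ((j + 1)! : K)⁻¹ * (abelPoly a (n + 1 - (j + 1))).eval (((j + 1 : ℕ) : K) * a) =
          ((n + 1)! : K)⁻¹ * (1 ^ j * (a * (n + 1)) ^ (n - j) * n.choose j) := by
      intro j hj
      rcases (mem_range_succ_iff.mp hj).eq_or_lt with rfl | hlt
      · simp
      obtain ⟨d, rfl⟩ : ∃ d, n = j + d + 1 := ⟨n - j - 1, by omega⟩
      rw [show j + d + 1 + 1 - (j + 1) = d + 1 by omega, show j + d + 1 - j = d + 1 by omega,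
        Nat.cast_choose K (by omega : j ≤ j + d + 1), show j + d + 1 - j = d + 1 by omega]
      simp only [eval_abelPoly_succ, one_pow, one_mul]
      rw [Nat.factorial_succ j, Nat.factorial_succ (j + d + 1)]
      have hn : (j + d + 1 + 1 : K) ≠ 0 := by exact_mod_cast (j + d + 1).succ_ne_zero
      have hf : ((j + d + 1)! : K) ≠ 0 := Nat.cast_ne_zero.mpr (Nat.factorial_ne_zero _)
      push_cast
      field_simp
      ring
    rw [sum_congr rfl hterm, ← mul_sum, ← add_pow, eval_abelPoly_succ]
    ring

end Polynomial

namespace PowerSeries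

section AbelSeries

variable {K : Type*} [Field K]

noncomputable def abelSeries (a x : K) : K⟦X⟧ :=
  mk fun n => (Polynomial.abelPoly a n).eval x

@[simp]
theorem coeff_abelSeries (a x : K) (n : ℕ) :
    coeff n (abelSeries a x) = (Polynomial.abelPoly a n).eval x :=
  coeff_mk _ _

theorem abelSeries_zero (a : K) : abelSeries a 0 = 1 := by
  ext (_ | n) <;> simp [coeff_one, Polynomial.eval_zero_abelPoly_succ]

variable [CharZero K]

theorem abelSeries_add (a x y : K) :
    abelSeries a (x + y) = abelSeries a x * abelSeries a y := by
  ext n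
  simp only [coeff_abelSeries, coeff_mul, Polynomial.eval_add_abelPoly]

theorem abelSeries_natCast_mul (a x : K) (n : ℕ) :
    abelSeries a (n * x) = abelSeries a x ^ n := by
  induction n with
  | zero => simp [abelSeries_zero]
  | succ n ih => rw [Nat.cast_succ, add_one_mul, abelSeries_add, ih, pow_succ]

end AbelSeries

theorem coeff_psComp_of_le (f : ℚ⟦X⟧) {g : ℚ⟦X⟧} (hg : constantCoeff g = 0) {n N : ℕ}
    (hN : n ≤ N) :
    coeff n (psComp f g) = ∑ j ∈ range (N + 1), coeff j f * coeff n (g ^ j) := by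
  rw [psComp, coeff_mk]
  refine sum_subset (range_subset_range.mpr (by omega)) fun j _ hj => ?_
  have hX : (X : ℚ⟦X⟧) ^ j ∣ g ^ j := pow_dvd_pow_of_dvd (X_dvd_iff.mpr hg) j
  rw [X_pow_dvd_iff.mp hX n (by simpa using hj), mul_zero]

theorem psComp_expand (f : ℚ⟦X⟧) {g : ℚ⟦X⟧} (hg : constantCoeff g = 0) {p : ℕ} (hp : p ≠ 0) :
    psComp f (expand p hp g) = expand p hp (psComp f g) := by
  ext n
  rw [coeff_expand]
  split_ifs with hdvd
  · obtain ⟨m, rfl⟩ := hdvd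
    rw [Nat.mul_div_cancel_left m (Nat.pos_of_ne_zero hp),
      coeff_psComp_of_le f hg (Nat.le_mul_of_pos_left m (Nat.pos_of_ne_zero hp)), psComp, coeff_mk]
    simp only [← map_pow, coeff_expand_mul]
  · rw [psComp, coeff_mk]
    exact sum_eq_zero fun j _ => by rw [← map_pow, coeff_expand_of_not_dvd p hp _ hdvd, mul_zero]

theorem psComp_exp_X_mul_abelSeries (a : ℚ) :
    psComp (exp ℚ) (X * abelSeries a a) = abelSeries a 1 := by
  ext m
  rw [psComp, coeff_mk, coeff_abelSeries, ← Polynomial.sum_range_inv_factorial_mul_eval_abelPoly]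
  refine sum_congr rfl fun j hj => ?_
  rw [coeff_exp, mul_pow, ← abelSeries_natCast_mul, coeff_X_pow_mul',
    if_pos (mem_range_succ_iff.mp hj), coeff_abelSeries]
  simp

end PowerSeries

theorem wSeries_succ_eq_X_mul_expand {a : ℕ} (ha : a ≠ 0) :
    wSeries (a + 1) = X * expand a ha (abelSeries (a : ℚ) 1) := by
  ext (_ | n)
  · simp [wSeries]
  rw [coeff_succ_X_mul, coeff_expand, wSeries, coeff_mk, Nat.add_sub_cancel, Nat.add_sub_cancel]
  split_ifs with h₁ h₂ h₂
  · obtain ⟨m, rfl⟩ := h₂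
    rw [Nat.mul_div_cancel_left m (Nat.pos_of_ne_zero ha), coeff_abelSeries]
    cases m with
    | zero => simp
    | succ d =>
      rw [Polynomial.eval_abelPoly_succ, show ((d + 1 : ℕ) : ℤ) - 1 = d by omega, zpow_natCast]
      push_cast
      ring
  · exact absurd h₁.2 h₂
  · exact absurd ⟨n.succ_pos, h₂⟩ h₁
  · rfl

theorem wSeries_eq_X_mul_psComp {a : ℕ} (ha : a ≠ 0) :
    wSeries (a + 1) = X * psComp (exp ℚ) (wSeries (a + 1) ^ a) := by
  have hpow : wSeries (a + 1) ^ a = expand a ha (X * abelSeries (a : ℚ) a) := by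
    rw [wSeries_succ_eq_X_mul_expand ha, mul_pow, map_mul, expand_X, ← map_pow,
      ← abelSeries_natCast_mul, mul_one]
  rw [hpow, psComp_expand _ (by simp) ha, psComp_exp_X_mul_abelSeries,
    wSeries_succ_eq_X_mul_expand ha]

theorem eq_of_eq_X_mul_psComp {f u v : ℚ⟦X⟧} {b : ℕ} (hu : u = X * psComp f (u ^ b))
    (hv : v = X * psComp f (v ^ b)) : u = v := by
  suffices h : ∀ n, trunc n u = trunc n v by
    ext n
    rw [← coeff_coe_trunc_of_lt n.lt_succ_self, h, coeff_coe_trunc_of_lt n.lt_succ_self]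
  intro n
  induction n with
  | zero => simp
  | succ n ih =>
    rw [trunc_succ, trunc_succ, ih]
    congr 2
    rw [hu, hv]
    cases n with
    | zero => simp
    | succ N =>
      rw [coeff_succ_X_mul, coeff_succ_X_mul, psComp, psComp, coeff_mk, coeff_mk]
      refine sum_congr rfl fun j _ => ?_
      rw [← pow_mul, ← pow_mul, ← coeff_coe_trunc_of_lt N.lt_succ_self, ← trunc_trunc_pow, ih,
        trunc_trunc_pow, coeff_coe_trunc_of_lt N.lt_succ_self]

/-- The unique formal power series solution with zero constant term of
`w = x·exp(w^{k−1})` is given by the explicit series `wSeries k`. -/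
theorem wSeries_unique_solution (k : ℕ) (hk : 2 ≤ k) :
    (PowerSeries.constantCoeff (R := ℚ) (wSeries k) = 0 ∧
      wSeries k = PowerSeries.X * psComp (PowerSeries.exp ℚ) ((wSeries k) ^ (k - 1))) ∧
    ∀ v : PowerSeries ℚ, PowerSeries.constantCoeff (R := ℚ) v = 0 →
      v = PowerSeries.X * psComp (PowerSeries.exp ℚ) (v ^ (k - 1)) → v = wSeries k := by
  obtain ⟨a, rfl⟩ : ∃ a, k = a + 1 := ⟨k - 1, by omega⟩
  have hw := wSeries_eq_X_mul_psComp (show a ≠ 0 by omega)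
  rw [Nat.add_sub_cancel]
  refine ⟨⟨?_, hw⟩, fun v _ hv => eq_of_eq_X_mul_psComp hv hw⟩
  rw [hw, map_mul, constantCoeff_X, zero_mul]
end

section
/- Hurwitz's formula in the one-part case: the number of minimal transitive ordered factorisations of an n-cycle in S_n into transpositions (which have n−1 factors) equals n^{n−2}. -/
/-!
Pitman's double counting. If `n - 1` transpositions multiply to an `n`-cycle, every orbit of the
product lies in a component of the graph spanned by the transpositions, so this graph is
connected, hence a spanning tree. Conversely, multiplying a permutation by a transposition that
joins two of its cycles merges them, so the edges of a spanning tree multiply, in any order, to an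
`n`-cycle.

Orienting each edge of the tree towards a chosen root turns an ordered factorisation together with
a root into a sequence of arcs `(t, h)` that builds a rooted forest one arc at a time: `t` is a root
and `h` lies in another tree. After `j` arcs there are `n - j` trees, each with one root, so there
are `n (n - j - 1)` ways to continue, and `n ^ (n - 1) (n - 1)!` sequences in all. The `(n - 1)!`
cycles of length `n` are conjugate, so each has `n ^ (n - 1) (n - 1)! / (n (n - 1)!) = n ^ (n - 2)`
factorisations.
-/

open Equiv Equiv.Perm Finset SimpleGraph
open scoped Nat

section MergeRel

variable {α : Type*} {r : α → α → Prop}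

def mergeRel (r : α → α → Prop) (a b : α) (x y : α) : Prop :=
  r x y ∨ ((r x a ∨ r x b) ∧ (r y a ∨ r y b))

theorem Equivalence.mergeRel (hr : Equivalence r) (a b : α) : Equivalence (mergeRel r a b) where
  refl x := .inl (hr.refl x)
  symm := by
    rintro x y (h | ⟨hx, hy⟩)
    exacts [.inl (hr.symm h), .inr ⟨hy, hx⟩]
  trans := by
    rintro x y z (hxy | ⟨hx, hy⟩) (hyz | ⟨hy', hz⟩)
    · exact .inl (hr.trans hxy hyz)
    · exact .inr ⟨hy'.imp (hr.trans hxy) (hr.trans hxy), hz⟩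
    · exact .inr ⟨hx, hy.imp (hr.trans (hr.symm hyz)) (hr.trans (hr.symm hyz))⟩
    · exact .inr ⟨hx, hz⟩

theorem mergeRel_mono {r' : α → α → Prop} (h : r ≤ r') (a b : α) :
    mergeRel r a b ≤ mergeRel r' a b := by
  rintro x y (hxy | ⟨hx, hy⟩)
  exacts [.inl (h _ _ hxy), .inr ⟨hx.imp (h _ _) (h _ _), hy.imp (h _ _) (h _ _)⟩]

theorem mergeRel_eq_of_rel (hr : Equivalence r) {a b : α} (hab : r a b) :
    mergeRel r a b = r := by
  ext x y
  refine ⟨?_, .inl⟩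
  rintro (h | ⟨hx, hy⟩)
  · exact h
  · have hx' : r x a := hx.elim id fun h => hr.trans h (hr.symm hab)
    have hy' : r y a := hy.elim id fun h => hr.trans h (hr.symm hab)
    exact hr.trans hx' (hr.symm hy')

theorem mergeRel_exchange (hr : Equivalence r) {a b x y : α} (h : mergeRel r a b x y)
    (hxy : ¬r x y) : mergeRel r x y a b := by
  obtain h | ⟨hx | hx, hy | hy⟩ := h
  · exact absurd h hxy
  · exact absurd (hr.trans hx (hr.symm hy)) hxy
  · exact .inr ⟨.inl (hr.symm hx), .inr (hr.symm hy)⟩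
  · exact .inr ⟨.inr (hr.symm hy), .inl (hr.symm hx)⟩
  · exact absurd (hr.trans hx (hr.symm hy)) hxy

end MergeRel

namespace SimpleGraph

variable {V : Type*} {G : SimpleGraph V} {r : V → V → Prop}

theorem reachable_le_of_adj_le (hr : Equivalence r) (h : G.Adj ≤ r) : G.Reachable ≤ r := by
  intro x y hxy
  rw [reachable_iff_reflTransGen] at hxy
  induction hxy with
  | refl => exact hr.refl x
  | tail _ hadj ih => exact hr.trans ih (h _ _ hadj)

theorem reachable_sup_edge (a b : V) :
    (G ⊔ edge a b).Reachable = mergeRel G.Reachable a b := by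
  have hab : (G ⊔ edge a b).Reachable a b := by
    rcases eq_or_ne a b with rfl | hne
    · rfl
    · exact Adj.reachable (.inr ((edge_adj ..).2 ⟨.inl ⟨rfl, rfl⟩, hne⟩))
  refine le_antisymm (reachable_le_of_adj_le (G.reachable_is_equivalence.mergeRel a b) ?_) ?_
  · rintro x y (h | h)
    · exact .inl h.reachable
    · obtain ⟨⟨rfl, rfl⟩ | ⟨rfl, rfl⟩, -⟩ := (edge_adj ..).1 h
      exacts [.inr ⟨.inl .rfl, .inr .rfl⟩, .inr ⟨.inr .rfl, .inl .rfl⟩]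
  · have hG : ∀ {x y}, G.Reachable x y → (G ⊔ edge a b).Reachable x y :=
      fun h => h.mono le_sup_left
    have hab' : ∀ {x}, G.Reachable x a ∨ G.Reachable x b → (G ⊔ edge a b).Reachable x a :=
      fun h => h.elim hG fun h => (hG h).trans hab.symm
    rintro x y (h | ⟨hx, hy⟩)
    exacts [hG h, (hab' hx).trans (hab' hy).symm]

end SimpleGraph

namespace Equiv.Perm

variable {α : Type*} {σ : Perm α} {r : α → α → Prop}

theorem sameCycle_le_of_apply (hr : Equivalence r) (h : ∀ x, r x (σ x)) : σ.SameCycle ≤ r := by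
  rintro x _ ⟨i, rfl⟩
  induction i using Int.induction_on with
  | zero => exact hr.refl x
  | succ i ih => exact hr.trans ih (by rw [add_comm, zpow_add, zpow_one, mul_apply]; exact h _)
  | pred i ih =>
    have : σ ((σ ^ (-(i : ℤ) - 1)) x) = (σ ^ (-(i : ℤ))) x := by
      rw [← mul_apply, ← zpow_one_add, show (1 : ℤ) + (-i - 1) = -i by ring]
    exact hr.trans ih (hr.symm (this ▸ h _))

variable [DecidableEq α]

theorem IsSwap.eq_swap_apply {e : Perm α} (h : e.IsSwap) {x : α} (hx : e x ≠ x) :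
    e = swap x (e x) := by
  obtain ⟨a, b, -, rfl⟩ := h
  obtain ⟨-, rfl | rfl⟩ := swap_apply_ne_self_iff.1 hx
  · rw [swap_apply_left]
  · rw [swap_apply_right, swap_comm]

variable [Finite α] {a b : α}

-- `σ * swap a b` sends `a` to `σ b` and then agrees with `σ` along the `σ`-cycle of `b`
-- until it reaches `b`.
theorem sameCycle_mul_swap_of_not_sameCycle (h : ¬σ.SameCycle a b) :
    (σ * swap a b).SameCycle a b := by
  by_contra hab
  have key : ∀ k : ℕ, (σ * swap a b).SameCycle a ((σ ^ k) (σ b)) := by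
    intro k
    induction k with
    | zero =>
      have hτa : σ b = (σ * swap a b) a := by rw [mul_apply, swap_apply_left]
      rw [pow_zero, one_apply, hτa]
      exact sameCycle_apply_right.2 .rfl
    | succ k ih =>
      set z := (σ ^ k) (σ b)
      have hzb : z ≠ b := by rintro hz; exact hab (hz ▸ ih)
      have hbz : σ.SameCycle b z := sameCycle_pow_right.2 (sameCycle_apply_right.2 .rfl)
      have hza : z ≠ a := fun hz => h (hz ▸ hbz).symm
      have : (σ ^ (k + 1)) (σ b) = (σ * swap a b) z := by
        rw [mul_apply, swap_apply_of_ne_of_ne hza hzb, pow_succ', mul_apply]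
      rw [this]
      exact ih.trans (sameCycle_apply_right.2 .rfl)
  obtain ⟨k, hk⟩ := (sameCycle_apply_left.2 (SameCycle.refl σ b)).exists_nat_pow_eq
  have := key k
  rw [hk] at this
  exact hab this

theorem sameCycle_mul_swap (h : ¬σ.SameCycle a b) :
    (σ * swap a b).SameCycle = mergeRel σ.SameCycle a b := by
  have hab := sameCycle_mul_swap_of_not_sameCycle h
  have hτ : ∀ x, x ≠ a → x ≠ b → (σ * swap a b) x = σ x := fun x hxa hxb => by
    rw [mul_apply, swap_apply_of_ne_of_ne hxa hxb]
  have hτa : (σ * swap a b) a = σ b := by rw [mul_apply, swap_apply_left]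
  have hτb : (σ * swap a b) b = σ a := by rw [mul_apply, swap_apply_right]
  apply le_antisymm
  · refine sameCycle_le_of_apply ((SameCycle.equivalence σ).mergeRel a b) fun x => ?_
    by_cases hxa : x = a
    · subst hxa
      exact .inr ⟨.inl .rfl, .inr (by rw [hτa, sameCycle_apply_left])⟩
    by_cases hxb : x = b
    · subst hxb
      exact .inr ⟨.inr .rfl, .inl (by rw [hτb, sameCycle_apply_left])⟩
    exact .inl (by rw [hτ x hxa hxb, sameCycle_apply_right])
  · have hle : σ.SameCycle ≤ (σ * swap a b).SameCycle := by
      refine sameCycle_le_of_apply (SameCycle.equivalence _) fun x => ?_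
      by_cases hxa : x = a
      · subst hxa
        rw [← hτb, sameCycle_apply_right]
        exact hab
      by_cases hxb : x = b
      · subst hxb
        rw [← hτa, sameCycle_apply_right]
        exact hab.symm
      rw [← hτ x hxa hxb, sameCycle_apply_right]
    calc mergeRel σ.SameCycle a b ≤ mergeRel (σ * swap a b).SameCycle a b := mergeRel_mono hle a b
      _ = (σ * swap a b).SameCycle := mergeRel_eq_of_rel (SameCycle.equivalence _) hab

theorem sameCycle_swap_mul (h : ¬σ.SameCycle a b) :
    (swap a b * σ).SameCycle = mergeRel σ.SameCycle a b := by
  have h' : ¬σ⁻¹.SameCycle a b := by rwa [sameCycle_inv]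
  ext x y
  rw [← sameCycle_inv, mul_inv_rev, swap_inv, sameCycle_mul_swap h']
  simp only [mergeRel, sameCycle_inv]

end Equiv.Perm

theorem Nat.card_sigma_of_card_eq {α : Type*} {β : α → Type*} [Finite α] [∀ a, Finite (β a)]
    {c : ℕ} (h : ∀ a, Nat.card (β a) = c) : Nat.card (Σ a, β a) = Nat.card α * c := by
  have := Fintype.ofFinite α
  rw [Nat.card_sigma, Finset.sum_congr rfl fun a _ => h a, sum_const, Finset.card_univ,
    smul_eq_mul, Nat.card_eq_fintype_card]

theorem Fin.image_cons {α : Type*} [DecidableEq α] {j : ℕ} (x : α) (g : Fin j → α) :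
    univ.image (Fin.cons x g : Fin (j + 1) → α) = insert x (univ.image g) := by
  ext y
  simp [Fin.exists_fin_succ, eq_comm]

section SwapGraph

variable {V : Type*} [DecidableEq V]

def swapGraph (S : Finset (Perm V)) : SimpleGraph V :=
  SimpleGraph.fromRel fun a b => swap a b ∈ S

@[simp]
theorem swapGraph_adj {S : Finset (Perm V)} {a b : V} :
    (swapGraph S).Adj a b ↔ a ≠ b ∧ swap a b ∈ S := by
  simp [swapGraph, swap_comm b a]

theorem swapGraph_mono {S T : Finset (Perm V)} (h : S ⊆ T) : swapGraph S ≤ swapGraph T :=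
  fun _ _ hab => swapGraph_adj.2 ⟨(swapGraph_adj.1 hab).1, h (swapGraph_adj.1 hab).2⟩

@[simp]
theorem swapGraph_empty : swapGraph (∅ : Finset (Perm V)) = ⊥ := by
  ext
  simp

theorem swap_eq_swap_iff {a b c d : V} (hab : a ≠ b) :
    swap a b = swap c d ↔ a = c ∧ b = d ∨ a = d ∧ b = c := by
  refine ⟨fun h => ?_, ?_⟩
  · have := congr($h a)
    rw [swap_apply_left, swap_apply_def] at this
    split_ifs at this <;> grind
  · rintro (⟨rfl, rfl⟩ | ⟨rfl, rfl⟩)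
    exacts [rfl, swap_comm _ _]

theorem swapGraph_insert [Fintype V] (S : Finset (Perm V)) (u v : V) :
    swapGraph (insert (swap u v) S) = swapGraph S ⊔ edge u v := by
  ext a b
  simp only [swapGraph_adj, mem_insert, sup_adj, edge_adj]
  by_cases hab : a = b
  · simp [hab]
  · rw [swap_eq_swap_iff hab]
    tauto

theorem swapGraph_image_eq_sup [Fintype V] {ι : Type*} [DecidableEq ι] (f : ι → Perm V)
    {s : Finset ι} {i : ι} (hi : i ∈ s) {u v : V} (h : f i = swap u v) :
    swapGraph (s.image f) = swapGraph ((s.erase i).image f) ⊔ edge u v := by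
  conv_lhs => rw [← insert_erase hi, image_insert, h]
  exact swapGraph_insert _ _ _

theorem reachable_apply_of_isSwap {S : Finset (Perm V)} {e : Perm V} (he : e ∈ S)
    (hsw : e.IsSwap) (x : V) : (swapGraph S).Reachable x (e x) := by
  obtain ⟨a, b, hab, rfl⟩ := hsw
  rcases eq_or_ne x a with rfl | hxa
  · exact Adj.reachable (by simpa [hab])
  rcases eq_or_ne x b with rfl | hxb
  · exact Adj.reachable (by simpa [hab.symm, swap_comm] using he)
  rw [swap_apply_of_ne_of_ne hxa hxb]

theorem sameCycle_prod_le_reachable {S : Finset (Perm V)} {l : List (Perm V)}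
    (hl : ∀ e ∈ l, e ∈ S ∧ e.IsSwap) : l.prod.SameCycle ≤ (swapGraph S).Reachable := by
  refine sameCycle_le_of_apply (reachable_is_equivalence _) fun x => ?_
  induction l with
  | nil => rfl
  | cons e l ih =>
    obtain ⟨he, hsw⟩ := hl e List.mem_cons_self
    exact (ih fun e' he' => hl e' (List.mem_cons_of_mem e he')).trans
      (reachable_apply_of_isSwap he hsw _)

theorem card_le_card_add_one_of_connected [Fintype V] {S : Finset (Perm V)}
    (h : (swapGraph S).Connected) : Fintype.card V ≤ #S + 1 := by
  let toSwap : Sym2 V → Perm V := Sym2.lift ⟨fun a b => swap a b, swap_comm⟩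
  have hinj : Set.InjOn toSwap (swapGraph S).edgeSet := by
    intro e₁ he₁ e₂ he₂ heq
    induction e₁ using Sym2.ind with | h a b => ?_
    induction e₂ using Sym2.ind with | h c d => ?_
    simp only [toSwap, mem_edgeSet, swapGraph_adj, Sym2.lift_mk] at he₁ heq
    simpa [Sym2.eq_iff] using (swap_eq_swap_iff he₁.1).1 heq
  have hmaps : ∀ e ∈ (swapGraph S).edgeSet, toSwap e ∈ (S : Set (Perm V)) := by
    intro e he
    induction e using Sym2.ind with | h a b => ?_
    simpa [toSwap] using (swapGraph_adj.1 he).2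
  have h₁ := h.card_vert_le_card_edgeSet_add_one
  have h₂ := Set.ncard_le_ncard_of_injOn _ hmaps hinj S.finite_toSet
  rw [Nat.card_eq_fintype_card, Nat.card_coe_set_eq] at h₁
  rw [Set.ncard_coe_finset] at h₂
  omega

end SwapGraph

section ArcForest

variable {V : Type*} [Fintype V] [DecidableEq V] {S T : Finset (V × V)} {x : V × V}

def arcGraph (T : Finset (V × V)) : SimpleGraph V :=
  swapGraph (T.image (Function.uncurry swap))

theorem arcGraph_mono (h : S ⊆ T) : arcGraph S ≤ arcGraph T :=
  swapGraph_mono (image_subset_image h)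

theorem arcGraph_insert (T : Finset (V × V)) (x : V × V) :
    arcGraph (insert x T) = arcGraph T ⊔ edge x.1 x.2 := by
  rw [arcGraph, image_insert]
  exact swapGraph_insert _ _ _

theorem arcGraph_image {ι : Type*} (g : ι → V × V) (s : Finset ι) :
    arcGraph (s.image g) = swapGraph (s.image (Function.uncurry swap ∘ g)) := by
  rw [arcGraph, image_image]

def IsArcForest (T : Finset (V × V)) : Prop :=
  ∀ x ∈ T, ¬(arcGraph (T.erase x)).Reachable x.1 x.2

theorem IsArcForest.mono (hT : IsArcForest T) (h : S ⊆ T) : IsArcForest S :=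
  fun x hx hr => hT x (h hx) (hr.mono (arcGraph_mono (erase_subset_erase x h)))

theorem IsArcForest.fst_ne_snd (hT : IsArcForest T) (hx : x ∈ T) : x.1 ≠ x.2 :=
  fun h => hT x hx (h ▸ .rfl)

theorem isArcForest_insert_iff (hx : x ∉ T) :
    IsArcForest (insert x T) ↔ IsArcForest T ∧ ¬(arcGraph T).Reachable x.1 x.2 := by
  refine ⟨fun h => ⟨h.mono (subset_insert x T), ?_⟩, fun ⟨hT, hxT⟩ y hy => ?_⟩
  · simpa [erase_insert hx] using h x (mem_insert_self x T)
  obtain rfl | hy := mem_insert.1 hy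
  · rwa [erase_insert hx]
  have hxy : x ≠ y := by rintro rfl; exact hx hy
  rw [erase_insert_of_ne hxy, arcGraph_insert, reachable_sup_edge]
  intro h
  have := mergeRel_exchange (reachable_is_equivalence _) h (hT y hy)
  rw [← reachable_sup_edge, ← arcGraph_insert, insert_erase hy] at this
  exact hxT this

theorem IsArcForest.sameCycle_prod {l : List (V × V)} (hl : l.Nodup)
    (hT : IsArcForest l.toFinset) :
    (l.map (Function.uncurry swap)).prod.SameCycle = (arcGraph l.toFinset).Reachable := by
  induction l with
  | nil => ext; simp [arcGraph, sameCycle_one]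
  | cons x l ih =>
    rw [List.nodup_cons] at hl
    rw [List.toFinset_cons, isArcForest_insert_iff (by simpa using hl.1)] at hT
    have ih := ih hl.2 hT.1
    have hx : Function.uncurry swap x = swap x.1 x.2 := rfl
    rw [List.map_cons, List.prod_cons, hx, sameCycle_swap_mul (by rw [ih]; exact hT.2), ih,
      List.toFinset_cons, arcGraph_insert, reachable_sup_edge]

-- An arc `(t, h)` joins `t` to its parent `h`. In a rooted forest every vertex is the tail of at
-- most one arc, and the roots are the vertices that are not tails.
def IsRootedForest (T : Finset (V × V)) : Prop :=
  Set.InjOn Prod.fst (T : Set (V × V)) ∧ IsArcForest T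

theorem IsRootedForest.mono (hT : IsRootedForest T) (h : S ⊆ T) : IsRootedForest S :=
  ⟨hT.1.mono (coe_subset.2 h), hT.2.mono h⟩

theorem isRootedForest_insert_iff (hx : x ∉ T) :
    IsRootedForest (insert x T) ↔
      IsRootedForest T ∧ x.1 ∉ T.image Prod.fst ∧ ¬(arcGraph T).Reachable x.1 x.2 := by
  rw [IsRootedForest, IsRootedForest, coe_insert, Set.injOn_insert (by simpa using hx),
    isArcForest_insert_iff hx]
  simp only [Set.mem_image, mem_coe, mem_image]
  tauto

theorem IsRootedForest.exists_root (hT : IsRootedForest T) (v : V) :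
    ∃ r ∉ T.image Prod.fst, (arcGraph T).Reachable r v := by
  induction T using Finset.induction_on generalizing v with
  | empty => exact ⟨v, by simp, .rfl⟩
  | insert x T hx ih =>
    obtain ⟨hT, hx1, hx12⟩ := (isRootedForest_insert_iff hx).1 hT
    have hle := arcGraph_mono (subset_insert x T)
    obtain ⟨r, hr, hrv⟩ := ih hT v
    by_cases hrx : r = x.1
    · obtain ⟨r', hr', hr'x⟩ := ih hT x.2
      refine ⟨r', ?_, ?_⟩
      · rw [image_insert, mem_insert, not_or]
        exact ⟨fun h => hx12 (h ▸ hr'x), hr'⟩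
      · have hx : (arcGraph (insert x T)).Reachable x.2 x.1 := by
          rw [arcGraph_insert, reachable_sup_edge]
          exact .inr ⟨.inr .rfl, .inl .rfl⟩
        exact (hr'x.mono hle).trans (hx.trans (hrx ▸ hrv.mono hle))
    · refine ⟨r, ?_, hrv.mono hle⟩
      rw [image_insert, mem_insert, not_or]
      exact ⟨hrx, hr⟩

theorem IsRootedForest.eq_of_reachable (hT : IsRootedForest T) {r₁ r₂ : V}
    (h₁ : r₁ ∉ T.image Prod.fst) (h₂ : r₂ ∉ T.image Prod.fst)
    (h : (arcGraph T).Reachable r₁ r₂) : r₁ = r₂ := by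
  induction T using Finset.induction_on generalizing r₁ r₂ with
  | empty => simpa [arcGraph] using h
  | insert x T hx ih =>
    obtain ⟨hT, hx1, -⟩ := (isRootedForest_insert_iff hx).1 hT
    simp only [image_insert, mem_insert, not_or] at h₁ h₂
    rw [arcGraph_insert, reachable_sup_edge] at h
    rcases h with h | ⟨hr₁ | hr₁, hr₂ | hr₂⟩
    · exact ih hT h₁.2 h₂.2 h
    · exact absurd (ih hT h₁.2 hx1 hr₁) h₁.1
    · exact absurd (ih hT h₁.2 hx1 hr₁) h₁.1
    · exact absurd (ih hT h₂.2 hx1 hr₂) h₂.1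
    · exact ih hT h₁.2 h₂.2 (hr₁.trans hr₂.symm)

theorem IsRootedForest.reachable (hT : IsRootedForest T) (hcard : #T + 1 = Fintype.card V)
    (v w : V) : (arcGraph T).Reachable v w := by
  obtain ⟨r, hr, hrv⟩ := hT.exists_root v
  obtain ⟨r', hr', hr'w⟩ := hT.exists_root w
  have hroots : #(univ \ T.image Prod.fst) ≤ 1 := by
    rw [card_sdiff_of_subset (subset_univ _), card_univ, card_image_of_injOn hT.1]
    omega
  obtain rfl := card_le_one.1 hroots r (by simpa using hr) r' (by simpa using hr')
  exact hrv.symm.trans hr'w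

theorem IsRootedForest.not_reachable_erase (hT : IsRootedForest T) (hx : x ∈ T) {ρ : V}
    (hρ : ρ ∉ T.image Prod.fst) : ¬(arcGraph (T.erase x)).Reachable x.1 ρ := by
  intro h
  have hx1 : x.1 ∉ (T.erase x).image Prod.fst := by
    intro hmem
    obtain ⟨y, hy, hyx⟩ := mem_image.1 hmem
    exact (mem_erase.1 hy).1 (hT.1 (mem_erase.1 hy).2 hx hyx)
  have hρ' : ρ ∉ (T.erase x).image Prod.fst :=
    fun h => hρ (image_subset_image (erase_subset x T) h)
  obtain rfl := (hT.mono (erase_subset x T)).eq_of_reachable hx1 hρ' h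
  exact hρ (mem_image_of_mem Prod.fst hx)

theorem IsRootedForest.card_extensions (hT : IsRootedForest T) :
    Nat.card {x : V × V // x.1 ∉ T.image Prod.fst ∧ ¬(arcGraph T).Reachable x.1 x.2} =
      Fintype.card V * (Fintype.card V - #T - 1) := by
  let e : {x : V × V // x.1 ∉ T.image Prod.fst ∧ ¬(arcGraph T).Reachable x.1 x.2} ≃
      Σ v : V, {r : V // r ∉ T.image Prod.fst ∧ ¬(arcGraph T).Reachable r v} :=
    { toFun x := ⟨x.1.2, x.1.1, x.2⟩
      invFun p := ⟨(p.2.1, p.1), p.2.2⟩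
      left_inv _ := rfl
      right_inv _ := rfl }
  rw [Nat.card_congr e, Nat.card_sigma_of_card_eq (c := Fintype.card V - #T - 1),
    Nat.card_eq_fintype_card]
  intro v
  obtain ⟨r₀, hr₀, hr₀v⟩ := hT.exists_root v
  have hiff : ∀ r, r ∈ (univ \ T.image Prod.fst).erase r₀ ↔
      r ∉ T.image Prod.fst ∧ ¬(arcGraph T).Reachable r v := fun r => by
    simp only [mem_erase, mem_sdiff, mem_univ, true_and]
    refine ⟨fun ⟨hne, hr⟩ => ⟨hr, fun hrv => ?_⟩, fun ⟨hr, hrv⟩ => ⟨?_, hr⟩⟩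
    · exact hne (hT.eq_of_reachable hr hr₀ (hrv.trans hr₀v.symm))
    · rintro rfl
      exact hrv hr₀v
  rw [← Nat.card_congr (Equiv.subtypeEquivRight hiff), Nat.card_eq_finsetCard,
    card_erase_of_mem (by simpa using hr₀), card_sdiff_of_subset (subset_univ _), card_univ,
    card_image_of_injOn hT.1]

end ArcForest

section RootedForestSeq

variable {V : Type*} [Fintype V] [DecidableEq V]

def IsRootedForestSeq {j : ℕ} (g : Fin j → V × V) : Prop :=
  Function.Injective g ∧ IsRootedForest (univ.image g)

variable (V) in
abbrev RootedForestSeq (j : ℕ) : Type _ :=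
  {g : Fin j → V × V // IsRootedForestSeq g}

theorem isRootedForestSeq_cons_iff {j : ℕ} {x : V × V} {g : Fin j → V × V} :
    IsRootedForestSeq (Fin.cons x g : Fin (j + 1) → V × V) ↔ IsRootedForestSeq g ∧
      x.1 ∉ (univ.image g).image Prod.fst ∧ ¬(arcGraph (univ.image g)).Reachable x.1 x.2 := by
  rw [IsRootedForestSeq, IsRootedForestSeq, Fin.cons_injective_iff, Fin.image_cons]
  constructor
  · rintro ⟨⟨hx, hg⟩, hT⟩
    have hx' : x ∉ univ.image g := by simpa using hx
    exact ⟨⟨hg, ((isRootedForest_insert_iff hx').1 hT).1⟩, ((isRootedForest_insert_iff hx').1 hT).2⟩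
  · rintro ⟨⟨hg, hT⟩, hx1, hx12⟩
    have hx' : x ∉ univ.image g := fun hx => hx1 (mem_image_of_mem Prod.fst hx)
    exact ⟨⟨by simpa using hx', hg⟩, (isRootedForest_insert_iff hx').2 ⟨hT, hx1, hx12⟩⟩

def rootedForestSeqSuccEquiv (j : ℕ) :
    RootedForestSeq V (j + 1) ≃ Σ g : RootedForestSeq V j,
      {x : V × V // x.1 ∉ (univ.image g.1).image Prod.fst ∧
        ¬(arcGraph (univ.image g.1)).Reachable x.1 x.2} where
  toFun g :=
    have h := isRootedForestSeq_cons_iff.1 (by rw [Fin.cons_self_tail]; exact g.2)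
    ⟨⟨Fin.tail g.1, h.1⟩, g.1 0, h.2⟩
  invFun p := ⟨Fin.cons p.2.1 p.1.1, isRootedForestSeq_cons_iff.2 ⟨p.1.2, p.2.2⟩⟩
  left_inv g := Subtype.ext (Fin.cons_self_tail g.1)
  right_inv _ := rfl

theorem card_rootedForestSeq (j : ℕ) :
    Nat.card (RootedForestSeq V j) =
      Fintype.card V ^ j * (Fintype.card V - 1).descFactorial j := by
  induction j with
  | zero =>
    rw [pow_zero, Nat.descFactorial_zero, one_mul, Nat.card_eq_one_iff_unique]
    exact ⟨inferInstance, ⟨⟨finZeroElim, Function.injective_of_subsingleton _,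
      by simp [IsRootedForest, IsArcForest]⟩⟩⟩
  | succ j ih =>
    rw [Nat.card_congr (rootedForestSeqSuccEquiv j),
      Nat.card_sigma_of_card_eq (c := Fintype.card V * (Fintype.card V - j - 1)), ih,
      Nat.descFactorial_succ, Nat.sub_right_comm, pow_succ]
    · ring
    · intro g
      rw [g.2.2.card_extensions, card_image_of_injective _ g.2.1, card_univ, Fintype.card_fin]

end RootedForestSeq

section FullCycles

variable {V : Type*} [Fintype V] [DecidableEq V] {σ : Perm V}

def IsFullCycle (σ : Perm V) : Prop :=
  σ.IsCycle ∧ σ.support = univ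

theorem IsFullCycle.apply_ne (hσ : IsFullCycle σ) (x : V) : σ x ≠ x :=
  Perm.mem_support.1 (hσ.2 ▸ mem_univ x)

theorem IsFullCycle.sameCycle (hσ : IsFullCycle σ) (x y : V) : σ.SameCycle x y :=
  hσ.1.sameCycle (hσ.apply_ne x) (hσ.apply_ne y)

theorem isFullCycle_of_sameCycle [Nontrivial V] (h : ∀ x y, σ.SameCycle x y) :
    IsFullCycle σ := by
  have hmoved : ∀ x, σ x ≠ x := fun x hx => by
    obtain ⟨y, hy⟩ := exists_ne x
    exact hy ((h x y).eq_of_left hx).symm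
  obtain ⟨x⟩ := (inferInstance : Nonempty V)
  exact ⟨⟨x, hmoved x, fun y _ => h x y⟩,
    eq_univ_of_forall fun y => Perm.mem_support.2 (hmoved y)⟩

theorem isFullCycle_iff_cycleType : IsFullCycle σ ↔ σ.cycleType = {Fintype.card V} := by
  refine ⟨fun h => by rw [h.1.cycleType, h.2, card_univ], fun h => ⟨?_, ?_⟩⟩
  · rw [← card_cycleType_eq_one, h, Multiset.card_singleton]
  · rw [← card_eq_iff_eq_univ, ← sum_cycleType, h, Multiset.sum_singleton]

theorem card_isFullCycle (hV : 2 ≤ Fintype.card V) :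
    Nat.card {σ : Perm V // IsFullCycle σ} = (Fintype.card V - 1)! := by
  rw [Nat.card_congr (Equiv.subtypeEquivRight fun _ => isFullCycle_iff_cycleType),
    Nat.card_eq_fintype_card, Fintype.card_subtype, card_of_cycleType_singleton hV le_rfl,
    Nat.choose_self, mul_one]

theorem IsFullCycle.exists_mem_closure (hσ : IsFullCycle σ) {S : Set (Perm V)}
    (h : σ ∈ Subgroup.closure S) (a b : V) : ∃ g ∈ Subgroup.closure S, g a = b := by
  obtain ⟨k, hk⟩ := hσ.sameCycle a b
  exact ⟨σ ^ k, zpow_mem h k, hk⟩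

end FullCycles

section Factorizations

variable {V : Type*} [Fintype V] [DecidableEq V] {M : ℕ} {σ : Perm V}

variable (V) in
abbrev SwapFactorization (M : ℕ) (σ : Perm V) : Type _ :=
  {f : Fin M → Perm V // (∀ i, (f i).IsSwap) ∧ (List.ofFn f).prod = σ}

variable (V) in
abbrev FullCycleFactorization (M : ℕ) : Type _ :=
  {f : Fin M → Perm V // (∀ i, (f i).IsSwap) ∧ IsFullCycle (List.ofFn f).prod}

theorem card_swapFactorization_conj (τ : Perm V) :
    Nat.card (SwapFactorization V M (τ * σ * τ⁻¹)) = Nat.card (SwapFactorization V M σ) := by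
  refine (Nat.card_congr (Equiv.subtypeEquiv
    (Equiv.piCongrRight fun _ => (MulAut.conj τ).toEquiv) fun f => ?_)).symm
  have hprod : (List.ofFn fun i => τ * f i * τ⁻¹).prod = τ * (List.ofFn f).prod * τ⁻¹ := by
    simpa [List.map_ofFn, Function.comp_def] using
      (map_list_prod (MulAut.conj τ) (List.ofFn f)).symm
  change _ ↔ (∀ i, (τ * f i * τ⁻¹).IsSwap) ∧ (List.ofFn fun i => τ * f i * τ⁻¹).prod = _
  simp [isSwap_iff_cycleType, cycleType_conj, hprod]

theorem IsFullCycle.card_swapFactorization_eq {σ' : Perm V} (hσ : IsFullCycle σ)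
    (hσ' : IsFullCycle σ') :
    Nat.card (SwapFactorization V M σ') = Nat.card (SwapFactorization V M σ) := by
  obtain ⟨τ, rfl⟩ := isConj_iff.1 (hσ.1.isConj hσ'.1 (by rw [hσ.2, hσ'.2]))
  exact card_swapFactorization_conj τ

def fullCycleFactorizationEquiv :
    FullCycleFactorization V M ≃ Σ σ : {σ : Perm V // IsFullCycle σ}, SwapFactorization V M σ where
  toFun f := ⟨⟨_, f.2.2⟩, f.1, f.2.1, rfl⟩
  invFun p := ⟨p.2.1, p.2.2.1, by rw [p.2.2.2]; exact p.1.2⟩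
  left_inv _ := rfl
  right_inv p := Sigma.subtype_ext (Subtype.ext p.2.2.2) rfl

theorem card_fullCycleFactorization (hσ : IsFullCycle σ) :
    Nat.card (FullCycleFactorization V M) =
      (Fintype.card V - 1)! * Nat.card (SwapFactorization V M σ) := by
  rw [Nat.card_congr fullCycleFactorizationEquiv,
    Nat.card_sigma_of_card_eq fun σ' => hσ.card_swapFactorization_eq σ'.2,
    card_isFullCycle (hσ.1.two_le_card_support.trans (card_le_univ _))]

end Factorizations

section Pitman

variable {V : Type*} [Fintype V] [DecidableEq V] {M : ℕ}

theorem reachable_of_fullCycleFactorization (f : FullCycleFactorization V M) (v w : V) :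
    (swapGraph (univ.image f.1)).Reachable v w := by
  refine sameCycle_prod_le_reachable (fun e he => ?_) v w (f.2.2.sameCycle v w)
  obtain ⟨i, rfl⟩ := List.mem_ofFn.1 he
  exact ⟨mem_image_of_mem _ (mem_univ i), f.2.1 i⟩

-- Otherwise the other `M - 1` transpositions would connect all `M + 1` vertices.
theorem not_reachable_erase_of_eq_swap (hM : M + 1 = Fintype.card V)
    (f : FullCycleFactorization V M) {i : Fin M} {u v : V} (hi : f.1 i = swap u v) :
    ¬(swapGraph ((univ.erase i).image f.1)).Reachable u v := by
  intro huv
  have : Nonempty V := ⟨u⟩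
  have hconn : (swapGraph ((univ.erase i).image f.1)).Connected := ⟨fun x y => by
    have := reachable_of_fullCycleFactorization f x y
    rwa [swapGraph_image_eq_sup f.1 (mem_univ i) hi, reachable_sup_edge,
      mergeRel_eq_of_rel (reachable_is_equivalence _) huv] at this⟩
  have h₁ := card_le_card_add_one_of_connected hconn
  have h₂ := card_image_le (s := univ.erase i) (f := f.1)
  rw [card_erase_of_mem (mem_univ i), card_univ, Fintype.card_fin] at h₂
  have := i.pos
  omega

theorem existsUnique_pitmanTail (hM : M + 1 = Fintype.card V) (f : FullCycleFactorization V M)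
    (ρ : V) (i : Fin M) :
    ∃! t, f.1 i t ≠ t ∧ ¬(swapGraph ((univ.erase i).image f.1)).Reachable t ρ := by
  obtain ⟨u, v, huv, hi⟩ := f.2.1 i
  have hnr := not_reachable_erase_of_eq_swap hM f hi
  have hρ : (swapGraph ((univ.erase i).image f.1)).Reachable u ρ ∨
      (swapGraph ((univ.erase i).image f.1)).Reachable v ρ := by
    have := reachable_of_fullCycleFactorization f u ρ
    rw [swapGraph_image_eq_sup f.1 (mem_univ i) hi, reachable_sup_edge] at this
    rcases this with h | ⟨-, h | h⟩
    exacts [.inl h, .inl h.symm, .inr h.symm]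
  simp only [hi, swap_apply_ne_self_iff, ne_eq, huv, not_false_eq_true, true_and]
  rcases hρ with h | h
  · refine ⟨v, ⟨.inr rfl, fun h' => hnr (h.trans h'.symm)⟩, ?_⟩
    rintro t ⟨rfl | rfl, ht⟩
    exacts [absurd h ht, rfl]
  · refine ⟨u, ⟨.inl rfl, fun h' => hnr (h'.trans h.symm)⟩, ?_⟩
    rintro t ⟨rfl | rfl, ht⟩
    exacts [rfl, absurd h ht]

-- The tail of the `i`-th edge oriented towards `ρ`.
noncomputable def pitmanTail (hM : M + 1 = Fintype.card V) (f : FullCycleFactorization V M)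
    (ρ : V) (i : Fin M) : V :=
  (existsUnique_pitmanTail hM f ρ i).exists.choose

variable (hM : M + 1 = Fintype.card V) (f : FullCycleFactorization V M) (ρ : V)

theorem pitmanTail_spec (i : Fin M) :
    f.1 i (pitmanTail hM f ρ i) ≠ pitmanTail hM f ρ i ∧
      ¬(swapGraph ((univ.erase i).image f.1)).Reachable (pitmanTail hM f ρ i) ρ :=
  (existsUnique_pitmanTail hM f ρ i).exists.choose_spec

theorem eq_pitmanTail {i : Fin M} {t : V} (h₁ : f.1 i t ≠ t)
    (h₂ : ¬(swapGraph ((univ.erase i).image f.1)).Reachable t ρ) : t = pitmanTail hM f ρ i :=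
  (existsUnique_pitmanTail hM f ρ i).unique ⟨h₁, h₂⟩ (pitmanTail_spec hM f ρ i)

theorem reachable_apply_pitmanTail (i : Fin M) :
    (swapGraph ((univ.erase i).image f.1)).Reachable (f.1 i (pitmanTail hM f ρ i)) ρ := by
  by_contra h
  have := eq_pitmanTail hM f ρ ((f.1 i).injective.ne (pitmanTail_spec hM f ρ i).1) h
  exact (pitmanTail_spec hM f ρ i).1 this

-- The head of edge `i` reaches `ρ` without edge `i`. If that path avoids edge `j`, edge `i` joins
-- a common tail `t` to it without edge `j`; otherwise edge `j` joins `t` to it without edge `i`.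
theorem pitmanTail_injective : Function.Injective (pitmanTail hM f ρ) := by
  intro i j hij
  by_contra hne
  set t := pitmanTail hM f ρ i
  obtain ⟨-, hri⟩ := pitmanTail_spec hM f ρ i
  obtain ⟨htj, hrj⟩ := pitmanTail_spec hM f ρ j
  rw [← hij] at htj hrj
  set H := swapGraph (((univ.erase i).erase j).image f.1)
  have hHi : H ≤ swapGraph ((univ.erase i).image f.1) :=
    swapGraph_mono (image_subset_image (erase_subset _ _))
  have hHj : H ≤ swapGraph ((univ.erase j).image f.1) :=
    swapGraph_mono (image_subset_image (erase_subset_erase j (erase_subset i univ)))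
  have hti' : (swapGraph ((univ.erase i).image f.1)).Reachable t (f.1 j t) :=
    reachable_apply_of_isSwap (mem_image_of_mem _ (mem_erase.2 ⟨Ne.symm hne, mem_univ j⟩))
      (f.2.1 j) t
  have htj' : (swapGraph ((univ.erase j).image f.1)).Reachable t (f.1 i t) :=
    reachable_apply_of_isSwap (mem_image_of_mem _ (mem_erase.2 ⟨hne, mem_univ i⟩)) (f.2.1 i) t
  have := reachable_apply_pitmanTail hM f ρ i
  rw [swapGraph_image_eq_sup f.1 (mem_erase.2 ⟨Ne.symm hne, mem_univ j⟩)
    ((f.2.1 j).eq_swap_apply htj), reachable_sup_edge] at this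
  rcases this with h | ⟨-, h | h⟩
  · exact hrj (htj'.trans (h.mono hHj))
  · exact hrj (h.mono hHj).symm
  · exact hri (hti'.trans (h.mono hHi).symm)

noncomputable def pitmanSeq : Fin M → V × V :=
  fun i => (pitmanTail hM f ρ i, f.1 i (pitmanTail hM f ρ i))

theorem uncurry_swap_comp_pitmanSeq : Function.uncurry swap ∘ pitmanSeq hM f ρ = f.1 :=
  funext fun i => ((f.2.1 i).eq_swap_apply (pitmanTail_spec hM f ρ i).1).symm

theorem isRootedForestSeq_pitmanSeq : IsRootedForestSeq (pitmanSeq hM f ρ) := by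
  have hinj : Function.Injective (pitmanSeq hM f ρ) :=
    fun i j h => pitmanTail_injective hM f ρ (congrArg Prod.fst h)
  refine ⟨hinj, ?_, ?_⟩
  · intro x hx y hy hxy
    obtain ⟨i, -, rfl⟩ := mem_image.1 hx
    obtain ⟨j, -, rfl⟩ := mem_image.1 hy
    rw [pitmanTail_injective hM f ρ hxy]
  · intro x hx
    obtain ⟨i, -, rfl⟩ := mem_image.1 hx
    rw [← image_erase hinj, arcGraph_image, uncurry_swap_comp_pitmanSeq]
    exact not_reachable_erase_of_eq_swap hM f ((f.2.1 i).eq_swap_apply (pitmanTail_spec hM f ρ i).1)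

theorem root_notMem_tails_pitmanSeq : ρ ∉ (univ.image (pitmanSeq hM f ρ)).image Prod.fst := by
  simp only [image_image, mem_image, mem_univ, true_and, not_exists]
  intro i hi
  have := (pitmanTail_spec hM f ρ i).2
  rw [show pitmanTail hM f ρ i = ρ from hi] at this
  exact this .rfl

end Pitman

section PitmanEquiv

variable {V : Type*} [Fintype V] [DecidableEq V] {M : ℕ} {σ : Perm V}

theorem isFullCycle_prod_of_rootedForestSeq [Nontrivial V] (hM : M + 1 = Fintype.card V)
    (g : RootedForestSeq V M) : IsFullCycle (List.ofFn (Function.uncurry swap ∘ g.1)).prod := by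
  have hl : (List.ofFn g.1).toFinset = univ.image g.1 := by
    ext
    simp [List.mem_ofFn]
  have hforest : IsArcForest (List.ofFn g.1).toFinset := hl ▸ g.2.2.2
  refine isFullCycle_of_sameCycle fun v w => ?_
  rw [← List.map_ofFn, hforest.sameCycle_prod (List.nodup_ofFn.2 g.2.1), hl]
  exact g.2.2.reachable
    (by rw [card_image_of_injective _ g.2.1, card_univ, Fintype.card_fin, hM]) v w

noncomputable def pitmanMap (hM : M + 1 = Fintype.card V) :
    FullCycleFactorization V M × V → RootedForestSeq V M :=
  fun p => ⟨pitmanSeq hM p.1 p.2, isRootedForestSeq_pitmanSeq hM p.1 p.2⟩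

theorem pitmanMap_injective (hM : M + 1 = Fintype.card V) : Function.Injective (pitmanMap hM) := by
  rintro ⟨f, ρ⟩ ⟨f', ρ'⟩ h
  have h : pitmanSeq hM f ρ = pitmanSeq hM f' ρ' := congrArg Subtype.val h
  obtain rfl : f = f' := Subtype.ext <| by
    rw [← uncurry_swap_comp_pitmanSeq hM f ρ, h, uncurry_swap_comp_pitmanSeq]
  have hT := (isRootedForestSeq_pitmanSeq hM f ρ).2
  have hcard : #(univ.image (pitmanSeq hM f ρ)) + 1 = Fintype.card V := by
    rw [card_image_of_injective _ (isRootedForestSeq_pitmanSeq hM f ρ).1, card_univ,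
      Fintype.card_fin, hM]
  refine Prod.ext rfl (hT.eq_of_reachable (root_notMem_tails_pitmanSeq hM f ρ) ?_
    (hT.reachable hcard ρ ρ'))
  rw [h]
  exact root_notMem_tails_pitmanSeq hM f ρ'

theorem pitmanMap_surjective [Nontrivial V] (hM : M + 1 = Fintype.card V) :
    Function.Surjective (pitmanMap hM) := by
  intro g
  have hne : ∀ i, (g.1 i).1 ≠ (g.1 i).2 :=
    fun i => g.2.2.2.fst_ne_snd (mem_image_of_mem _ (mem_univ i))
  let f : FullCycleFactorization V M :=
    ⟨Function.uncurry swap ∘ g.1, fun i => ⟨_, _, hne i, rfl⟩,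
      isFullCycle_prod_of_rootedForestSeq hM g⟩
  obtain ⟨ρ, hρ, -⟩ := g.2.2.exists_root (Classical.arbitrary V)
  refine ⟨(f, ρ), Subtype.ext (funext fun i => ?_)⟩
  have hhead : f.1 i (g.1 i).1 = (g.1 i).2 := swap_apply_left _ _
  have htail : (g.1 i).1 = pitmanTail hM f ρ i := by
    refine eq_pitmanTail hM f ρ (by rw [hhead]; exact (hne i).symm) ?_
    have := g.2.2.not_reachable_erase (mem_image_of_mem g.1 (mem_univ i)) hρ
    rwa [← image_erase g.2.1, arcGraph_image] at this
  change (pitmanTail hM f ρ i, f.1 i (pitmanTail hM f ρ i)) = g.1 i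
  rw [← htail, hhead]

noncomputable def pitmanEquiv [Nontrivial V] (hM : M + 1 = Fintype.card V) :
    FullCycleFactorization V M × V ≃ RootedForestSeq V M :=
  Equiv.ofBijective (pitmanMap hM) ⟨pitmanMap_injective hM, pitmanMap_surjective hM⟩

theorem card_swapFactorization (hM : M + 1 = Fintype.card V) (hσ : IsFullCycle σ) :
    Nat.card (SwapFactorization V M σ) = Fintype.card V ^ (M - 1) := by
  obtain ⟨x, hx, -⟩ := hσ.1
  have : Nontrivial V := ⟨⟨σ x, x, hx⟩⟩
  have h := card_rootedForestSeq (V := V) M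
  rw [← Nat.card_congr (pitmanEquiv hM), Nat.card_prod, card_fullCycleFactorization hσ,
    Nat.card_eq_fintype_card (α := V), ← hM, Nat.add_sub_cancel, Nat.descFactorial_self] at h
  rw [← hM]
  obtain ⟨k, rfl⟩ : ∃ k, M = k + 1 :=
    ⟨M - 1, by have := hσ.1.two_le_card_support.trans (card_le_univ _); omega⟩
  refine Nat.eq_of_mul_eq_mul_right (by positivity : 0 < (k + 1)! * (k + 2)) ?_
  calc Nat.card (SwapFactorization V (k + 1) σ) * ((k + 1)! * (k + 2))
      = (k + 1)! * Nat.card (SwapFactorization V (k + 1) σ) * (k + 1 + 1) := by ring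
    _ = (k + 1 + 1) ^ (k + 1) * (k + 1)! := h
    _ = (k + 1 + 1) ^ (k + 1 - 1) * ((k + 1)! * (k + 2)) := by rw [Nat.add_sub_cancel]; ring

end PitmanEquiv

theorem hurwitz_one_part_general (n : ℕ) (π : Equiv.Perm (Fin n))
    (hcyc : π.IsCycle) (hsupp : π.support = Finset.univ) :
    Nat.card {f : Fin (n - 1) → Equiv.Perm (Fin n) //
        (∀ i, (f i).IsSwap) ∧ (List.ofFn f).prod = π ∧
        ∀ a b : Fin n, ∃ g ∈ Subgroup.closure (Set.range f), g a = b} =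
      n ^ (n - 2) := by
  have hπ : IsFullCycle π := ⟨hcyc, hsupp⟩
  have hn : 2 ≤ n := by simpa using hcyc.two_le_card_support.trans (card_le_univ _)
  have htrans : ∀ f : Fin (n - 1) → Perm (Fin n), (List.ofFn f).prod = π →
      ∀ a b, ∃ g ∈ Subgroup.closure (Set.range f), g a = b := fun f hf =>
    hπ.exists_mem_closure (hf ▸ list_prod_mem fun e he =>
      Subgroup.subset_closure ((List.mem_ofFn' f e).1 he))
  rw [Nat.card_congr (Equiv.subtypeEquivRight fun f =>
      and_congr_right fun _ => and_iff_left_of_imp (htrans f)),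
    card_swapFactorization (by rw [Fintype.card_fin]; omega) hπ, Fintype.card_fin, Nat.sub_sub]

/-- Hurwitz's formula in the one-part case: the number of transitive ordered
factorisations of an `n`-cycle into `n − 1` transpositions is `n^{n−2}`. -/
theorem hurwitz_one_part (n : ℕ) (hn : 1 ≤ n) (π : Equiv.Perm (Fin n))
    (hcyc : π.IsCycle) (hsupp : π.support = Finset.univ) :
    Nat.card {f : Fin (n - 1) → Equiv.Perm (Fin n) //
        (∀ i, (f i).IsSwap) ∧ (List.ofFn f).prod = π ∧
        ∀ a b : Fin n, ∃ g ∈ Subgroup.closure (Set.range f), g a = b} =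
      n ^ (n - 2) :=
  hurwitz_one_part_general n π hcyc hsupp
end
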